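/- arXiv:1709.08000 — 3 statements merged into one kernel-verified Lean document; each statement's English description precedes it below -/
import Mathlib

section
/- For all natural numbers n and m, the Bell numbers satisfy Spivey's formula: B_{n+m} = \sum_{k=0}^{n} \sum_{j=0}^{m} j^{n-k} * S(m,j) * C(n,k) * B_k (with the convention 0^0 = 1). -/
/-- Stirling numbers of the second kind. -/
def stirling2 : ℕ → ℕ → ℕ
  | 0, 0 => 1
  | 0, _ + 1 => 0
  | _ + 1, 0 => 0
  | n + 1, k + 1 => stirling2 n k + (k + 1) * stirling2 n (k + 1)

/-- Bell numbers. -/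
def bell (n : ℕ) : ℕ := ∑ k ∈ Finset.range (n + 1), stirling2 n k

/-!
Let `φ : ℕ[X] → ℕ` be the linear functional `X ^ i ↦ B_i`. The Bell recurrence
`B_{n+1} = ∑ C(n,i) B_i` says exactly that `φ (X * p) = φ (p.comp (X + 1))`. Iterating this shift
rule against the Stirling recurrence gives `φ (X ^ m * p) = ∑ j, S(m,j) φ (p.comp (X + j))`;
for `p = X ^ n`, expanding `(X + j) ^ n` binomially yields Spivey's formula.
-/

open Finset

theorem stirling2_eq_stirlingSecond : ∀ n k, stirling2 n k = Nat.stirlingSecond n k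
  | 0, 0 | 0, _ + 1 | _ + 1, 0 => rfl
  | n + 1, k + 1 => by
    rw [stirling2, Nat.stirlingSecond_succ_succ, stirling2_eq_stirlingSecond n k,
      stirling2_eq_stirlingSecond n (k + 1), add_comm]

namespace Nat

theorem stirlingSecond_succ_succ_eq_sum_choose (n k : ℕ) :
    stirlingSecond (n + 1) (k + 1) = ∑ i ∈ range (n + 1), n.choose i * stirlingSecond i k := by
  induction n generalizing k with
  | zero => cases k <;> simp [stirlingSecond_succ_succ]
  | succ n ih =>
    have pascal := sum_choose_succ_mul (R := ℕ) (fun i _ => stirlingSecond i k) n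
    simp only [cast_id] at pascal
    rw [pascal, ← ih]
    cases k with
    | zero => simp [stirlingSecond_succ_succ]
    | succ k =>
      simp only [stirlingSecond_succ_succ _ k, mul_add, sum_add_distrib, mul_left_comm _ (k + 1),
        ← mul_sum]
      rw [← ih, ← ih, stirlingSecond_succ_succ (n + 1) (k + 1)]
      ring

theorem sum_smul_stirlingSecond_succ {M : Type*} [AddCommMonoid M] (f : ℕ → M) (m : ℕ) :
    ∑ j ∈ range (m + 2), stirlingSecond (m + 1) j • f j =
      ∑ j ∈ range (m + 1), stirlingSecond m j • (f (j + 1) + j • f j) := by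
  set g : ℕ → M := fun j => (j * stirlingSecond m j) • f j
  have shift : ∑ j ∈ range (m + 1), g (j + 1) = ∑ j ∈ range (m + 1), g j := by
    have h := (sum_range_succ' g (m + 1)).symm.trans (sum_range_succ g (m + 1))
    simpa [g, stirlingSecond_eq_zero_of_lt (lt_add_one m)] using h
  rw [sum_range_succ', stirlingSecond_succ_zero, zero_smul, add_zero]
  simp only [stirlingSecond_succ_succ, add_smul, sum_add_distrib, smul_add, smul_smul]
  rw [shift, add_comm]
  simp only [g, mul_comm]

end Nat

theorem bell_eq_sum_stirlingSecond {n N : ℕ} (h : n ≤ N) :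
    bell n = ∑ k ∈ range (N + 1), Nat.stirlingSecond n k := by
  simp only [bell, stirling2_eq_stirlingSecond]
  refine sum_subset (range_subset_range.2 (by omega)) fun k _ hk => ?_
  exact Nat.stirlingSecond_eq_zero_of_lt (by simpa using hk)

theorem bell_succ (n : ℕ) : bell (n + 1) = ∑ i ∈ range (n + 1), n.choose i * bell i := by
  rw [bell_eq_sum_stirlingSecond le_rfl, sum_range_succ', Nat.stirlingSecond_succ_zero, add_zero]
  simp only [Nat.stirlingSecond_succ_succ_eq_sum_choose]
  rw [sum_comm]
  refine sum_congr rfl fun i hi => ?_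
  rw [← mul_sum, bell_eq_sum_stirlingSecond (Nat.lt_succ_iff.1 (mem_range.1 hi))]

open Polynomial

theorem map_X_pow_mul_eq_sum_stirlingSecond {R M F : Type*} [CommSemiring R] [AddCommMonoid M]
    [FunLike F R[X] M] [AddMonoidHomClass F R[X] M] (φ : F)
    (hφ : ∀ p, φ (X * p) = φ (p.comp (X + 1))) (m : ℕ) (p : R[X]) :
    φ (X ^ m * p) = ∑ j ∈ range (m + 1), Nat.stirlingSecond m j • φ (p.comp (X + C (j : R))) := by
  induction m generalizing p with
  | zero => simp
  | succ m ih =>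
    have shift : ∀ j : ℕ, φ ((X * p).comp (X + C (j : R))) =
        φ (p.comp (X + C ((j + 1 : ℕ) : R))) + j • φ (p.comp (X + C (j : R))) := by
      intro j
      have shift_comp : (X + C (j : R)).comp (X + 1) = X + C ((j + 1 : ℕ) : R) := by
        simp [add_assoc, add_comm]
      rw [mul_comp, X_comp, add_mul, map_add, hφ, comp_assoc, shift_comp, C_mul',
        Nat.cast_smul_eq_nsmul, map_nsmul]
    rw [pow_succ, mul_assoc, ih, Nat.sum_smul_stirlingSecond_succ]
    simp only [shift]

noncomputable def bellFunctional : ℕ[X] →ₗ[ℕ] ℕ :=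
  lsum fun i => LinearMap.mulRight ℕ (bell i)

@[simp]
theorem bellFunctional_monomial (k a : ℕ) : bellFunctional (monomial k a) = a * bell k := by
  simp [bellFunctional]

theorem bellFunctional_X_pow (k : ℕ) : bellFunctional (X ^ k) = bell k := by
  simp [← monomial_one_right_eq_X_pow]

theorem bellFunctional_X_add_C_pow (c n : ℕ) :
    bellFunctional ((X + C c) ^ n) = ∑ k ∈ range (n + 1), c ^ (n - k) * n.choose k * bell k := by
  rw [add_pow, map_sum]
  refine sum_congr rfl fun k _ => ?_
  rw [← C_pow, ← C_eq_natCast, mul_assoc, ← C_mul, X_pow_mul, C_mul_X_pow_eq_monomial,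
    bellFunctional_monomial, Nat.cast_id]

theorem bellFunctional_X_mul (p : ℕ[X]) :
    bellFunctional (X * p) = bellFunctional (p.comp (X + 1)) := by
  induction p using Polynomial.induction_on' with
  | add p q hp hq => simp only [mul_add, add_comp, map_add, hp, hq]
  | monomial k a =>
    rw [X_mul_monomial, monomial_comp, C_mul', map_smul, ← C_1, bellFunctional_X_add_C_pow]
    simp only [bellFunctional_monomial, one_pow, one_mul, ← bell_succ, smul_eq_mul]

/-- Spivey's Bell number formula. -/
theorem spivey_bell (n m : ℕ) :
    bell (n + m) =
      ∑ k ∈ Finset.range (n + 1), ∑ j ∈ Finset.range (m + 1),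
        j ^ (n - k) * stirling2 m j * Nat.choose n k * bell k := by
  rw [← bellFunctional_X_pow, add_comm, pow_add,
    map_X_pow_mul_eq_sum_stirlingSecond bellFunctional bellFunctional_X_mul]
  simp only [X_pow_comp, Nat.cast_id, bellFunctional_X_add_C_pow, smul_eq_mul, mul_sum,
    stirling2_eq_stirlingSecond]
  rw [sum_comm]
  exact sum_congr rfl fun k _ => sum_congr rfl fun j _ => by ring
end

section
/- Let R be a commutative ring, q ∈ R, A an associative unital R-algebra, and a, b ∈ A satisfying the q-commutation relation a*b - q•(b*a) = 1. Then for every natural number k: (b*a)*(b^k) = (b^k)*([k]_q • 1 + q^k • (b*a)). -/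
def qInt {R : Type*} [CommRing R] (q : R) (n : ℕ) : R :=
  ∑ i ∈ Finset.range n, q ^ i

theorem qInt_zero {R : Type*} [CommRing R] (q : R) : qInt q 0 = 0 :=
  Finset.sum_range_zero _

theorem qInt_succ {R : Type*} [CommRing R] (q : R) (n : ℕ) :
    qInt q (n + 1) = qInt q n + q ^ n :=
  Finset.sum_range_succ _ _

section Intertwining

variable {R : Type*} [CommRing R] {A : Type*} [Semiring A] [Algebra R A]

theorem mul_pow_eq_pow_mul_qInt_of_mul_eq (q : R) {x b : A} (hx : x * b = b * (1 + q • x))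
    (k : ℕ) : x * b ^ k = b ^ k * (qInt q k • (1 : A) + q ^ k • x) := by
  induction k with
  | zero => simp [qInt_zero]
  | succ k ih =>
    have step : (qInt q k • (1 : A) + q ^ k • x) * b
        = b * (qInt q (k + 1) • (1 : A) + q ^ (k + 1) • x) := by
      simp only [add_mul, smul_mul_assoc, one_mul, hx, mul_add, mul_one, mul_smul_comm,
        qInt_succ, pow_succ]
      module
    rw [pow_succ, ← mul_assoc, ih, mul_assoc, step, ← mul_assoc]

end Intertwining

theorem qBoson_numberOp_mul {R : Type*} [CommRing R] (q : R) {A : Type*} [Ring A]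
    [Algebra R A] {a b : A} (h : a * b - q • (b * a) = 1) :
    (b * a) * b = b * (1 + q • (b * a)) := by
  rw [mul_assoc, sub_eq_iff_eq_add.mp h]

/-- The identity (b a) b^k = b^k ([k]_q + q^k b a). -/
theorem qBoson_numberOp_pow {R : Type*} [CommRing R] (q : R) {A : Type*} [Ring A]
    [Algebra R A] (a b : A) (h : a * b - q • (b * a) = 1) (k : ℕ) :
    (b * a) * b ^ k = b ^ k * (qInt q k • (1 : A) + q ^ k • (b * a)) :=
  mul_pow_eq_pow_mul_qInt_of_mul_eq q (qBoson_numberOp_mul q h) k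
end

section
/- Let R be a commutative ring, q ∈ R, A an associative unital R-algebra, and a, b ∈ A satisfying the q-commutation relation a*b - q•(b*a) = 1. Let M be a module over A and let v ∈ M satisfy a • v = 0. Then for all natural numbers k and s: (b^k * a^k) • (b^s • v) = [s]_{q,k} • (b^s • v), where [s]_{q,k} = \prod_{i=0}^{k-1} [s-i]_q (which equals 0 when k > s). -/
/-!
Moving `a` to the right through `b ^ (n + 1)` with `a b = q b a + 1` gives
`a b^(n+1) = q^(n+1) b^(n+1) a + [n+1]_q b^n`. On a vacuum `v` (with `a v = 0`) this says that
`a` lowers `b^s v` to `[s]_q b^(s-1) v`, so `a^k` sends it to `[s]_{q,k} b^(s-k) v`, and `b^k`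
raises it back. When `k > s` the factor `[0]_q = 0` kills the product, so the truncated
exponent `s - k` does no harm.
-/

section QCommutation

variable {R : Type*} [CommRing R] {q : R} {A : Type*} [Semiring A] [Algebra R A] {a b : A}

theorem mul_pow_succ_eq_of_qComm (hab : a * b = q • (b * a) + 1) (n : ℕ) :
    a * b ^ (n + 1) = q ^ (n + 1) • (b ^ (n + 1) * a) + qInt q (n + 1) • b ^ n := by
  induction n with
  | zero => simp [qInt, hab]
  | succ n ih =>
    have hqInt : qInt q (n + 2) = q ^ (n + 1) + qInt q (n + 1) := by
      rw [qInt, Finset.sum_range_succ, add_comm, qInt]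
    calc a * b ^ (n + 2)
        = (a * b ^ (n + 1)) * b := by rw [pow_succ b (n + 1), mul_assoc]
      _ = q ^ (n + 1) • (b ^ (n + 1) * (a * b)) + qInt q (n + 1) • b ^ (n + 1) := by
        rw [ih, add_mul, smul_mul_assoc, smul_mul_assoc, mul_assoc, ← pow_succ]
      _ = q ^ (n + 2) • (b ^ (n + 2) * a) + qInt q (n + 2) • b ^ (n + 1) := by
        rw [hab, mul_add, mul_one, mul_smul_comm, smul_add, smul_smul, ← pow_succ,
          ← mul_assoc, ← pow_succ, hqInt, add_smul]
        abel

variable {M : Type*} [AddCommMonoid M] [Module A M] [Module R M] [IsScalarTower R A M]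
  {v : M}

theorem smul_pow_smul_vacuum (hab : a * b = q • (b * a) + 1) (hv : a • v = 0) (s : ℕ) :
    a • (b ^ s • v) = qInt q s • (b ^ (s - 1) • v) := by
  cases s with
  | zero => simp [qInt, hv]
  | succ n =>
    rw [← mul_smul, mul_pow_succ_eq_of_qComm hab, add_smul, smul_assoc, mul_smul, hv,
      smul_zero, smul_zero, zero_add, smul_assoc, Nat.add_sub_cancel]

theorem pow_smul_pow_smul_vacuum (hab : a * b = q • (b * a) + 1) (hv : a • v = 0) (k s : ℕ) :
    a ^ k • (b ^ s • v) = (∏ i ∈ Finset.range k, qInt q (s - i)) • (b ^ (s - k) • v) := by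
  induction k with
  | zero => simp
  | succ k ih =>
    rw [pow_succ', mul_smul, ih, smul_comm, smul_pow_smul_vacuum hab hv, smul_smul,
      Finset.prod_range_succ, mul_comm, Nat.sub_sub]

end QCommutation

/-- Fock states are eigenvectors of b^k a^k with eigenvalue the q-falling factorial. -/
theorem qBoson_fock_eigen {R : Type*} [CommRing R] (q : R) {A : Type*} [Ring A]
    [Algebra R A] (a b : A) (h : a * b - q • (b * a) = 1) {M : Type*}
    [AddCommMonoid M] [Module A M] [Module R M] [IsScalarTower R A M]
    (v : M) (hv : a • v = 0) (k s : ℕ) :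
    (b ^ k * a ^ k) • ((b ^ s) • v) =
      (∏ i ∈ Finset.range k, qInt q (s - i)) • ((b ^ s) • v) := by
  have hab : a * b = q • (b * a) + 1 := (sub_eq_iff_eq_add.mp h).trans (add_comm _ _)
  rw [mul_smul, pow_smul_pow_smul_vacuum hab hv, smul_comm, ← mul_smul, ← pow_add]
  rcases le_or_gt k s with hks | hks
  · rw [Nat.add_sub_cancel' hks]
  · have hzero : ∏ i ∈ Finset.range k, qInt q (s - i) = 0 :=
      Finset.prod_eq_zero (Finset.mem_range.mpr hks) (by simp [qInt])
    simp [hzero]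
end
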